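/- Let α, β ∈ ℂ. In the cubic Hecke algebra H(Q,3) over ℂ, the two-sided ideal I₃ generated by the element R₀ equals the ℂ-linear span of the three elements R₀, b₁·R₀ and b₁²·R₀. -/

import Mathlib

def braidRels (m : ℕ) : Set (FreeGroup (Fin m)) :=
  { r | (∃ i j : Fin m, (i : ℕ) + 1 < (j : ℕ) ∧
          r = FreeGroup.of i * FreeGroup.of j * (FreeGroup.of i)⁻¹ * (FreeGroup.of j)⁻¹) ∨
        (∃ i j : Fin m, (j : ℕ) = (i : ℕ) + 1 ∧
          r = FreeGroup.of i * FreeGroup.of j * FreeGroup.of i *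
              (FreeGroup.of j * FreeGroup.of i * FreeGroup.of j)⁻¹) }

abbrev BraidGroup (n : ℕ) := PresentedGroup (braidRels (n - 1))

def braidGen (n : ℕ) (i : Fin (n - 1)) : BraidGroup n := PresentedGroup.of i

theorem braid_mk_eq_one {m : ℕ} {r : FreeGroup (Fin m)} (hr : r ∈ braidRels m) :
    PresentedGroup.mk (braidRels m) r = 1 :=
  (QuotientGroup.eq_one_iff r).mpr (Subgroup.subset_normalClosure hr)

noncomputable def braidIncl (n : ℕ) : BraidGroup n →* BraidGroup (n + 1) :=
  PresentedGroup.toGroup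
    (f := fun i => braidGen (n + 1) (Fin.castLE (by omega : n - 1 ≤ n + 1 - 1) i))
    (by
      rintro r (⟨i, j, hij, rfl⟩ | ⟨i, j, hij, rfl⟩)
      · have h1 := braid_mk_eq_one (m := n + 1 - 1)
          (Or.inl ⟨Fin.castLE (by omega) i, Fin.castLE (by omega) j, by simpa using hij, rfl⟩)
        simp only [map_mul, map_inv, FreeGroup.lift_apply_of] at h1 ⊢
        exact h1
      · have h1 := braid_mk_eq_one (m := n + 1 - 1)
          (Or.inr ⟨Fin.castLE (by omega) i, Fin.castLE (by omega) j, by simpa using hij, rfl⟩)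
        simp only [map_mul, map_inv, FreeGroup.lift_apply_of] at h1 ⊢
        exact h1)

theorem braidIncl_gen (n : ℕ) (i : Fin (n - 1)) :
    braidIncl n (braidGen n i) = braidGen (n + 1) (Fin.castLE (by omega) i) :=
  PresentedGroup.toGroup.of _

variable (R : Type) [CommRing R]

noncomputable def gb (n : ℕ) (i : Fin (n - 1)) : MonoidAlgebra R (BraidGroup n) :=
  MonoidAlgebra.of R (BraidGroup n) (braidGen n i)

inductive cubicRel (α β : R) (n : ℕ) :
    MonoidAlgebra R (BraidGroup n) → MonoidAlgebra R (BraidGroup n) → Prop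
  | cube (i : Fin (n - 1)) :
      cubicRel α β n (gb R n i ^ 3) (α • gb R n i ^ 2 + β • gb R n i + 1)

abbrev CubicHecke (α β : R) (n : ℕ) := RingQuot (cubicRel R α β n)

noncomputable def hb (α β : R) (n : ℕ) (i : Fin (n - 1)) : CubicHecke R α β n :=
  RingQuot.mkAlgHom R (cubicRel R α β n) (gb R n i)

theorem mapDomain_gb (n : ℕ) (i : Fin (n - 1)) :
    (MonoidAlgebra.mapDomainAlgHom R R (braidIncl n)) (gb R n i)
      = gb R (n + 1) (Fin.castLE (by omega) i) := by
  simp only [gb, MonoidAlgebra.mapDomainAlgHom_apply, MonoidAlgebra.of_apply,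
    MonoidAlgebra.mapDomain_single, braidIncl_gen]

noncomputable def heckeIncl (α β : R) (n : ℕ) :
    CubicHecke R α β n →ₐ[R] CubicHecke R α β (n + 1) :=
  RingQuot.liftAlgHom R
    ⟨(RingQuot.mkAlgHom R (cubicRel R α β (n + 1))).comp
        (MonoidAlgebra.mapDomainAlgHom R R (braidIncl n)),
      by
        rintro x y ⟨i⟩
        have h2 : (MonoidAlgebra.mapDomainAlgHom R R (braidIncl n)) (gb R n i ^ 3)
            = gb R (n + 1) (Fin.castLE (by omega) i) ^ 3 := by
          rw [map_pow, mapDomain_gb]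
        have h3 : (MonoidAlgebra.mapDomainAlgHom R R (braidIncl n))
              (α • gb R n i ^ 2 + β • gb R n i + 1)
            = α • gb R (n + 1) (Fin.castLE (by omega) i) ^ 2
              + β • gb R (n + 1) (Fin.castLE (by omega) i) + 1 := by
          rw [map_add, map_add, map_smul, map_smul, map_pow, map_one, mapDomain_gb]
        simp only [AlgHom.comp_apply, h2, h3]
        exact RingQuot.mkAlgHom_rel R (cubicRel.cube _)⟩

theorem heckeIncl_gen (α β : R) (n : ℕ) (i : Fin (n - 1)) :
    heckeIncl R α β n (hb R α β n i) = hb R α β (n + 1) (Fin.castLE (by omega) i) := by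
  simp only [heckeIncl, hb, RingQuot.liftAlgHom_mkAlgHom_apply, AlgHom.comp_apply, mapDomain_gb]

noncomputable def R0elt {A : Type*} [Ring A] [Algebra R A] (α β : R) (x y : A) : A :=
  y * x ^ 2 * y
  + (β ^ 2 - α) • (x ^ 2 * y ^ 2 * x ^ 2)
  + (α ^ 2 - α * β ^ 2 - β) • (x * y ^ 2 * x ^ 2 + x ^ 2 * y ^ 2 * x)
  + (α ^ 2 - α * β ^ 2) • (x ^ 2 * y * x ^ 2)
  + (1 + 2 * α * β + α ^ 2 * β ^ 2 - α ^ 3) • (x * y ^ 2 * x)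
  + (1 + α * β + α ^ 2 * β ^ 2 - α ^ 3) • (x * y * x ^ 2 + x ^ 2 * y * x)
  + (1 + 2 * α * β - β ^ 3) • (y ^ 2 * x ^ 2 + x ^ 2 * y ^ 2)
  + (α * β ^ 3 - 2 * α - 2 * α ^ 2 * β) • (y * x ^ 2 + x ^ 2 * y)
  + (α * β ^ 3 - 2 * α - 2 * α ^ 2 * β + β ^ 2) • (y ^ 2 * x + x * y ^ 2)
  + (α ^ 4 - α ^ 3 * β ^ 2 - 2 * α ^ 2 * β - 3 * α) • (x * y * x)
  + (2 * α ^ 3 * β + 3 * α ^ 2 - α ^ 2 * β ^ 3 - α * β ^ 2) • (y * x + x * y)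
  + (β ^ 4 - 2 * β - 3 * α * β ^ 2 + α ^ 2) • (x ^ 2 + y ^ 2)
  + (1 + 4 * α * β + 3 * α ^ 2 * β ^ 2 - α ^ 3 - α * β ^ 4 - β ^ 3) • x
  + (1 + 3 * α * β + 3 * α ^ 2 * β ^ 2 - α ^ 3 - α * β ^ 4) • y
  + algebraMap R A (3 * β ^ 2 - β ^ 5 - 2 * α - 3 * α ^ 2 * β + 4 * α * β ^ 3)

theorem map_R0elt {A B : Type*} [Ring A] [Ring B] [Algebra R A] [Algebra R B]
    (f : A →ₐ[R] B) (α β : R) (x y : A) :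
    f (R0elt R α β x y) = R0elt R α β (f x) (f y) := by
  simp only [R0elt, map_add, map_mul, map_pow, map_smul, AlgHom.commutes]

inductive KRel (α β : R) (n : ℕ) : CubicHecke R α β n → CubicHecke R α β n → Prop
  | r0 (j : Fin (n - 1)) (h : (j : ℕ) + 1 < n - 1) :
      KRel α β n (R0elt R α β (hb R α β n j) (hb R α β n ⟨(j : ℕ) + 1, h⟩)) 0

abbrev KAlg (α β : R) (n : ℕ) := RingQuot (KRel R α β n)

noncomputable def towerIncl (α β : R) (n : ℕ) :
    KAlg R α β n →ₐ[R] KAlg R α β (n + 1) :=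
  RingQuot.liftAlgHom R
    ⟨(RingQuot.mkAlgHom R (KRel R α β (n + 1))).comp (heckeIncl R α β n),
      by
        rintro x y ⟨j, h⟩
        have hle : n - 1 ≤ n + 1 - 1 := by omega
        have hlt : ((Fin.castLE hle j : Fin (n + 1 - 1)) : ℕ) + 1 < n + 1 - 1 := by
          simp only [Fin.coe_castLE]; omega
        have e3 : Fin.castLE hle ⟨(j : ℕ) + 1, h⟩
            = (⟨((Fin.castLE hle j : Fin (n + 1 - 1)) : ℕ) + 1, hlt⟩ : Fin (n + 1 - 1)) := by
          ext; simp
        rw [AlgHom.comp_apply, AlgHom.comp_apply, map_R0elt R (heckeIncl R α β n),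
          heckeIncl_gen, heckeIncl_gen, e3, map_zero (heckeIncl R α β n)]
        exact RingQuot.mkAlgHom_rel R (KRel.r0 (Fin.castLE hle j) hlt)⟩

/-- The class of the inverse `b_{i+1}⁻¹` in the cubic Hecke algebra. -/
noncomputable def hbInv (α β : R) (n : ℕ) (i : Fin (n - 1)) : CubicHecke R α β n :=
  RingQuot.mkAlgHom R (cubicRel R α β n)
    (MonoidAlgebra.of R (BraidGroup n) (braidGen n i)⁻¹)

/-- The class of the generator `b_{i+1}` in `K_n(α,β)`. -/
noncomputable def kb (α β : R) (n : ℕ) (i : Fin (n - 1)) : KAlg R α β n :=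
  RingQuot.mkAlgHom R (KRel R α β n) (hb R α β n i)

/-- The class of `b_{i+1}⁻¹` in `K_n(α,β)`. -/
noncomputable def kbInv (α β : R) (n : ℕ) (i : Fin (n - 1)) : KAlg R α β n :=
  RingQuot.mkAlgHom R (KRel R α β n) (hbInv R α β n i)

/-- The iterated tower map `K_n(α,β) → K_{n+k}(α,β)`. -/
noncomputable def towerInclMany (α β : R) (n : ℕ) :
    (k : ℕ) → (KAlg R α β n →ₐ[R] KAlg R α β (n + k))
  | 0 => AlgHom.id R _
  | k + 1 => (towerIncl R α β (n + k)).comp (towerInclMany α β n k)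

/-- The class of the generator `b_n` in `K_{n+1}(α,β)` (for `n ≥ 1`). -/
noncomputable def lastGen (α β : R) (n : ℕ) (h : 1 ≤ n) : KAlg R α β (n + 1) :=
  kb R α β (n + 1) ⟨n - 1, by omega⟩

/-- The class of `b_n⁻¹` in `K_{n+1}(α,β)` (for `n ≥ 1`). -/
noncomputable def lastGenInv (α β : R) (n : ℕ) (h : 1 ≤ n) : KAlg R α β (n + 1) :=
  kbInv R α β (n + 1) ⟨n - 1, by omega⟩

/-- An admissible functional with parameters `(z, z̄)` on the tower of the algebras
`K_n(α,β)`: a compatible family of `R`-linear functionals satisfying the Markov-type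
conditions for the last generator and its inverse. -/
structure AdmissibleFunctional (α β z zbar : R) : Type _ where
  T : ∀ n : ℕ, KAlg R α β n →ₗ[R] R
  compat : ∀ (n : ℕ) (x : KAlg R α β n), T (n + 1) (towerIncl R α β n x) = T n x
  cond_z : ∀ (n : ℕ) (h : 1 ≤ n) (x y : KAlg R α β n),
      T (n + 1) (towerIncl R α β n x * lastGen R α β n h * towerIncl R α β n y)
        = z * T n (x * y)
  cond_zbar : ∀ (n : ℕ) (h : 1 ≤ n) (x y : KAlg R α β n),
      T (n + 1) (towerIncl R α β n x * lastGenInv R α β n h * towerIncl R α β n y)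
        = zbar * T n (x * y)

/-- A Markov trace is an admissible functional each of whose components is a trace. -/
def AdmissibleFunctional.IsMarkov {α β z zbar : R}
    (T : AdmissibleFunctional R α β z zbar) : Prop :=
  ∀ (n : ℕ) (a b : KAlg R α β n), T.T n (a * b) = T.T n (b * a)

/-- A normalized functional takes the value `1` on the unit of `K₁(α,β)`. -/
def AdmissibleFunctional.IsNormalized {α β z zbar : R}
    (T : AdmissibleFunctional R α β z zbar) : Prop :=
  T.T 1 1 = 1

/-- The generator `b₁` of `H(Q_{α,β},3)`. -/
noncomputable def bOne (α β : ℂ) : CubicHecke ℂ α β 3 := hb ℂ α β 3 ⟨0, by omega⟩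

/-- The generator `b₂` of `H(Q_{α,β},3)`. -/
noncomputable def bTwo (α β : ℂ) : CubicHecke ℂ α β 3 := hb ℂ α β 3 ⟨1, by omega⟩

/-- The element `R₀` of `H(Q_{α,β},3)`. -/
noncomputable def rZero (α β : ℂ) : CubicHecke ℂ α β 3 := R0elt ℂ α β (bOne α β) (bTwo α β)

/-!
`R₀` commutes with `b₁`, and `b₂ R₀ = b₁ R₀`. Since `R₀` is invariant under the anti-automorphism
reversing words in `b₁, b₂`, also `R₀ b₂ = R₀ b₁`. Hence multiplying `b₁ᵏ R₀` on either side by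
either generator gives `b₁ᵏ⁺¹ R₀`, and the cubic relation brings every `b₁ᵏ R₀` back into the span
of `R₀, b₁ R₀, b₁² R₀`. This span is therefore stable under multiplication by `b₁, b₂` on both
sides, so it is a two-sided ideal: `b₁, b₂` generate `H(Q,3)` as an algebra, because the cubic
relation makes `bᵢ⁻¹ = bᵢ² - α bᵢ - β` a polynomial in `bᵢ`.
-/

section CubicHeckeRelations

variable {R} (α β : R) (n : ℕ)

theorem braidGen_braid {i j : Fin (n - 1)} (h : (j : ℕ) = i + 1) :
    braidGen n i * braidGen n j * braidGen n i = braidGen n j * braidGen n i * braidGen n j := by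
  have h1 := braid_mk_eq_one (Or.inr ⟨i, j, h, rfl⟩)
  simp only [map_mul, map_inv] at h1
  exact mul_inv_eq_one.mp h1

theorem hb_braid {i j : Fin (n - 1)} (h : (j : ℕ) = i + 1) :
    hb R α β n i * hb R α β n j * hb R α β n i = hb R α β n j * hb R α β n i * hb R α β n j := by
  have h1 := congrArg (fun g => RingQuot.mkAlgHom R (cubicRel R α β n)
    (MonoidAlgebra.of R (BraidGroup n) g)) (braidGen_braid n h)
  simp only [map_mul] at h1
  exact h1

theorem hb_pow_three (i : Fin (n - 1)) :
    hb R α β n i ^ 3 = α • hb R α β n i ^ 2 + β • hb R α β n i + 1 := by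
  simpa only [hb, map_pow, map_add, map_smul, map_one] using
    RingQuot.mkAlgHom_rel R (cubicRel.cube (α := α) (β := β) i)

theorem hbInv_eq (i : Fin (n - 1)) :
    hbInv R α β n i = hb R α β n i ^ 2 - α • hb R α β n i - β • 1 := by
  have hleft : hbInv R α β n i * hb R α β n i = 1 := by
    rw [hbInv, hb, gb, ← map_mul, ← map_mul, inv_mul_cancel, map_one, map_one]
  have hright : hb R α β n i * (hb R α β n i ^ 2 - α • hb R α β n i - β • 1) = 1 := by
    rw [mul_sub, mul_sub, mul_smul_comm, mul_smul_comm, mul_one, ← pow_succ', ← pow_two,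
      hb_pow_three]
    module
  calc hbInv R α β n i
      = hbInv R α β n i * (hb R α β n i * (hb R α β n i ^ 2 - α • hb R α β n i - β • 1)) := by
        rw [hright, mul_one]
    _ = hb R α β n i ^ 2 - α • hb R α β n i - β • 1 := by rw [← mul_assoc, hleft, one_mul]

theorem mkAlgHom_of_mem_adjoin (g : BraidGroup n) :
    RingQuot.mkAlgHom R (cubicRel R α β n) (MonoidAlgebra.of R (BraidGroup n) g)
      ∈ Algebra.adjoin R (Set.range (hb R α β n)) := by
  obtain ⟨w, rfl⟩ := PresentedGroup.mk_surjective (braidRels (n - 1)) g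
  induction w using FreeGroup.induction_on with
  | C1 => simpa only [map_one] using Subalgebra.one_mem _
  | of i => exact Algebra.subset_adjoin ⟨i, rfl⟩
  | inv_of i _ =>
    have hi : hb R α β n i ∈ Algebra.adjoin R (Set.range (hb R α β n)) :=
      Algebra.subset_adjoin ⟨i, rfl⟩
    rw [map_inv]
    change hbInv R α β n i ∈ _
    rw [hbInv_eq]
    exact sub_mem (sub_mem (pow_mem hi 2) (Subalgebra.smul_mem _ hi α))
      (Subalgebra.smul_mem _ (one_mem _) β)
  | mul u v hu hv => simpa only [map_mul] using mul_mem hu hv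

theorem adjoin_range_hb : Algebra.adjoin R (Set.range (hb R α β n)) = ⊤ := by
  rw [eq_top_iff]
  rintro a -
  obtain ⟨p, rfl⟩ := RingQuot.mkAlgHom_surjective R (cubicRel R α β n) a
  induction p using MonoidAlgebra.induction_on with
  | of g => exact mkAlgHom_of_mem_adjoin α β n g
  | add p q hp hq => simpa only [map_add] using add_mem hp hq
  | smul c p hp => simpa only [map_smul] using Subalgebra.smul_mem _ hp c

end CubicHeckeRelations

section R0eltIdentities

variable {R} {A : Type*} [Ring A] [Algebra R A] {α β : R} {x y : A}

open MulOpposite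

theorem R0elt_op : R0elt R α β (op x) (op y) = op (R0elt R α β x y) := by
  apply unop_injective
  simp only [R0elt, unop_add, unop_mul, unop_pow, unop_smul, unop_op, MulOpposite.algebraMap_apply,
    mul_assoc]
  abel_nf

-- In the next two proofs the difference of the two sides is written out as an explicit
-- two-sided combination of the cubic relators `X`, `Y` and the braid relator `B`.
set_option maxHeartbeats 1000000 in
theorem mul_R0elt_eq (hx : x ^ 3 = α • x ^ 2 + β • x + 1) (hy : y ^ 3 = α • y ^ 2 + β • y + 1)
    (hxy : x * y * x = y * x * y) : y * R0elt R α β x y = x * R0elt R α β x y := by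
  obtain ⟨X, hX⟩ : ∃ X, x ^ 3 - (α • x ^ 2 + β • x + 1) = X := ⟨_, rfl⟩
  obtain ⟨Y, hY⟩ : ∃ Y, y ^ 3 - (α • y ^ 2 + β • y + 1) = Y := ⟨_, rfl⟩
  obtain ⟨B, hB⟩ : ∃ B, y * x * y - x * y * x = B := ⟨_, rfl⟩
  have key : y * R0elt R α β x y - x * R0elt R α β x y =
      (2*β - β^4 + 3*α*β^2 - α^2) • X
      + (2*α - α*β^3 + 2*α^2*β) • (X*y)
      + (-1 - α*β - α^2*β^2 + α^3) • (X*y*x)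
      + (β - β^4 + 3*α*β^2 - α^2) • (X*y*x*x)
      + (-β^2 - α*β^3 + α^2*β) • (X*y*x*x*x)
      + (β^3 - α*β) • (X*y*x*x*x*x)
      + (2*α - α*β^3 + 2*α^2*β) • (X*y*x*x*y)
      + (-α*β - α^2*β^2 + α^3) • (X*y*x*x*y*x)
      + (α*β^2 - α^2) • (X*y*x*x*y*x*x)
      + (-1 + β^3 - 2*α*β) • (X*y*x*x*y*y)
      + (β + α*β^2 - α^2) • (X*y*x*x*y*y*x)
      + (-β^2 + α) • (X*y*x*x*y*y*x*x)
      + (-1 + β^3 - 2*α*β) • (X*y*y)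
      + (β + α*β^2 - α^2) • (X*y*y*x)
      + (-β^2 + α) • (X*y*y*x*x)
      + (-2*β + β^4 - 3*α*β^2 + α^2) • Y
      + (β^2 - 2*α + α*β^3 - 2*α^2*β) • (Y*x)
      + (1 - β^3 + 2*α*β) • (Y*x*x)
      + (-α*β^2 + 3*α^2 - α^2*β^3 + 2*α^3*β) • B
      + (-β^2 + β^5 - 3*α - 2*α*β^3 - 2*α^2*β - α^3*β^2 + α^4) • (B*x)
      + (1 + β^3 + α*β + α*β^4 - α^3) • (B*x*x)
      + (-β^4 + α*β^2) • (B*x*x*x)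
      - β • (B*x*x*y)
      + (1 - α*β + α*β^4 - 2*α^2*β^2) • (B*x*y)
      + (α*β^2 + α^2*β^3 - α^3*β) • (B*x*y*x)
      + (-α*β^3 + α^2*β) • (B*x*y*x*x)
      - α • (B*x*y*x*y)
      + B*x*y*x*y*x
      + (β - β^4 + 2*α*β^2) • (B*x*y*y)
      + (-β^2 - α*β^3 + α^2*β) • (B*x*y*y*x)
      + (β^3 - α*β) • (B*x*y*y*x*x)
      + (β^2 - 2*α + α*β^3 - 2*α^2*β) • (B*y)
      + (1 + 2*α*β + α^2*β^2 - α^3) • (B*y*x)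
      + (-β - α*β^2 + α^2) • (B*y*x*x)
      + (-2*α + α*β^3 - 2*α^2*β) • (x*B)
      + (1 + α*β^4 - α^2*β^2 - α^3) • (x*B*x)
      + (α^2 + α^2*β^3 - α^3*β) • (x*B*x*x)
      + (-α*β^3 + α^2*β) • (x*B*x*x*x)
      + (-2*α^2 + α^2*β^3 - 2*α^3*β) • (x*B*x*y)
      + (α + α^2*β + α^3*β^2 - α^4) • (x*B*x*y*x)
      + (-α^2*β^2 + α^3) • (x*B*x*y*x*x)
      + (α - α*β^3 + 2*α^2*β) • (x*B*x*y*y)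
      + (-α*β - α^2*β^2 + α^3) • (x*B*x*y*y*x)
      + (α*β^2 - α^2) • (x*B*x*y*y*x*x)
      + (β - β^4 + 2*α*β^2) • (x*x*B*x)
      + (-β^2 - α*β^3 + α^2*β) • (x*x*B*x*x)
      + (β^3 - α*β) • (x*x*B*x*x*x)
      + (2*α - α*β^3 + 2*α^2*β) • (x*x*B*x*y)
      + (-α*β - α^2*β^2 + α^3) • (x*x*B*x*y*x)
      + (α*β^2 - α^2) • (x*x*B*x*y*x*x)
      + (-1 + β^3 - 2*α*β) • (x*x*B*x*y*y)
      + (β + α*β^2 - α^2) • (x*x*B*x*y*y*x)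
      + (-β^2 + α) • (x*x*B*x*y*y*x*x)
      + (-α*β^2 + α^2) • (x*x*y*X)
      + (1 - β^3 + 2*α*β) • (x*x*y*X*y*x)
      + (-β - α*β^2 + α^2) • (x*x*y*X*y*x*x)
      + (β^2 - α) • (x*x*y*X*y*x*x*x)
      + (-2*α + α*β^3 - 2*α^2*β) • (x*x*y*x*B)
      + (α*β + α^2*β^2 - α^3) • (x*x*y*x*B*x)
      + (-α*β^2 + α^2) • (x*x*y*x*B*x*x)
      + (1 - β^3 + 2*α*β) • (x*x*y*x*B*y)
      + (-β - α*β^2 + α^2) • (x*x*y*x*B*y*x)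
      + (β^2 - α) • (x*x*y*x*B*y*x*x)
      + (1 - β^3 + 2*α*β) • (x*x*y*x*x*B)
      + (-β - α*β^2 + α^2) • (x*x*y*x*x*B*x)
      + (β^2 - α) • (x*x*y*x*x*B*x*x)
      + (β^2 - α) • (x*x*y*y*X)
      + (1 + α*β + α^2*β^2 - α^3) • (x*y*X)
      - β • (x*y*X*y)
      + (-2*α + α*β^3 - 2*α^2*β) • (x*y*X*y*x)
      + (1 + α*β + α^2*β^2 - α^3) • (x*y*X*y*x*x)
      + (-α*β^2 + α^2) • (x*y*X*y*x*x*x)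
      + (2*α^2 - α^2*β^3 + 2*α^3*β) • (x*y*x*B)
      + (-α - α^2*β - α^3*β^2 + α^4) • (x*y*x*B*x)
      + (α^2*β^2 - α^3) • (x*y*x*B*x*x)
      + (-α + α*β^3 - 2*α^2*β) • (x*y*x*B*y)
      + (α*β + α^2*β^2 - α^3) • (x*y*x*B*y*x)
      + (-α*β^2 + α^2) • (x*y*x*B*y*x*x)
      + (-2*α + α*β^3 - 2*α^2*β) • (x*y*x*x*B)
      + (1 + α*β + α^2*β^2 - α^3) • (x*y*x*x*B*x)
      + (-α*β^2 + α^2) • (x*y*x*x*B*x*x)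
      + (-α*β^2 + α^2) • (x*y*y*X)
      - β^2 • (y*X)
      + (β^3 - α*β) • (y*X*x)
      + (-β + β^4 - 2*α*β^2) • (y*X*y*x)
      + (β^2 + α*β^3 - α^2*β) • (y*X*y*x*x)
      + (-β^3 + α*β) • (y*X*y*x*x*x)
      - y*X*y*x*x*y
      + (-1 + α*β - α*β^4 + 2*α^2*β^2) • (y*x*B)
      + (-α*β^2 - α^2*β^3 + α^3*β) • (y*x*B*x)
      + (α*β^3 - α^2*β) • (y*x*B*x*x)
      + α • (y*x*B*x*y)
      - y*x*B*x*y*x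
      + (-β + β^4 - 2*α*β^2) • (y*x*B*y)
      + (β^2 + α*β^3 - α^2*β) • (y*x*B*y*x)
      + (-β^3 + α*β) • (y*x*B*y*x*x)
      + (-β + β^4 - 2*α*β^2) • (y*x*x*B)
      + (β^2 + α*β^3 - α^2*β) • (y*x*x*B*x)
      + (-β^3 + α*β) • (y*x*x*B*x*x)
      - y*x*x*B*x*y
      + y*x*x*y*x*B
      + (-β^3 + α*β) • (y*y*X) := by
    subst X Y B
    simp only [R0elt, pow_succ, pow_zero, one_mul, Algebra.algebraMap_eq_smul_one, mul_add,
      add_mul, sub_mul, mul_sub, smul_add, smul_sub, smul_mul_assoc, mul_smul_comm, smul_smul,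
      mul_one, mul_assoc]
    module
  rw [sub_eq_zero.mpr hx] at hX
  rw [sub_eq_zero.mpr hy] at hY
  rw [sub_eq_zero.mpr hxy.symm] at hB
  subst X Y B
  simpa only [mul_zero, zero_mul, smul_zero, add_zero, sub_zero, zero_sub, neg_zero,
    sub_eq_zero] using key

theorem R0elt_mul_eq (hx : x ^ 3 = α • x ^ 2 + β • x + 1) (hy : y ^ 3 = α • y ^ 2 + β • y + 1)
    (hxy : x * y * x = y * x * y) : R0elt R α β x y * y = R0elt R α β x y * x := by
  have h := mul_R0elt_eq (x := op x) (y := op y)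
    (by simpa only [op_pow, op_add, op_smul, op_one] using congrArg op hx)
    (by simpa only [op_pow, op_add, op_smul, op_one] using congrArg op hy)
    (by simpa only [op_mul, mul_assoc] using congrArg op hxy)
  rw [R0elt_op, ← op_mul, ← op_mul] at h
  exact op_injective h

theorem commute_R0elt (hx : x ^ 3 = α • x ^ 2 + β • x + 1) (hxy : x * y * x = y * x * y) :
    Commute x (R0elt R α β x y) := by
  obtain ⟨X, hX⟩ : ∃ X, x ^ 3 - (α • x ^ 2 + β • x + 1) = X := ⟨_, rfl⟩
  obtain ⟨B, hB⟩ : ∃ B, y * x * y - x * y * x = B := ⟨_, rfl⟩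
  have key : R0elt R α β x y * x - x * R0elt R α β x y =
      (2*α - α*β^3 + 2*α^2*β) • (X*y)
      + (-1 - α*β - α^2*β^2 + α^3) • (X*y*x)
      + (α*β^2 - α^2) • (X*y*x*x)
      + (-1 + β^3 - 2*α*β) • (X*y*y)
      + (β + α*β^2 - α^2) • (X*y*y*x)
      + (-β^2 + α) • (X*y*y*x*x)
      + B*x*y
      + (-α*β^2 + α^2) • (x*x*y*X)
      + (β^2 - α) • (x*x*y*y*X)
      + (1 + α*β + α^2*β^2 - α^3) • (x*y*X)
      + (-β - α*β^2 + α^2) • (x*y*y*X)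
      + (-2*α + α*β^3 - 2*α^2*β) • (y*X)
      - y*x*B
      + (1 - β^3 + 2*α*β) • (y*y*X) := by
    subst X B
    simp only [R0elt, pow_succ, pow_zero, one_mul, Algebra.algebraMap_eq_smul_one, mul_add,
      add_mul, sub_mul, mul_sub, smul_add, smul_sub, smul_mul_assoc, mul_smul_comm, smul_smul,
      mul_one, mul_assoc]
    module
  rw [sub_eq_zero.mpr hx] at hX
  rw [sub_eq_zero.mpr hxy.symm] at hB
  subst X B
  simp only [mul_zero, zero_mul, smul_zero, add_zero, sub_zero, sub_eq_zero] at key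
  exact key.symm

end R0eltIdentities

section IdealSpan

variable {R} {A : Type*} [Ring A] [Algebra R A]

theorem mul_left_mem_of_adjoin_eq_top {s : Set A} (hs : Algebra.adjoin R s = ⊤)
    {M : Submodule R A} (hM : ∀ a ∈ s, ∀ m ∈ M, a * m ∈ M) (a : A) {m : A} (hm : m ∈ M) :
    a * m ∈ M := by
  have ha : a ∈ Algebra.adjoin R s := hs ▸ Algebra.mem_top
  induction ha using Algebra.adjoin_induction generalizing m with
  | mem a ha => exact hM a ha m hm
  | algebraMap c => simpa only [← Algebra.smul_def] using M.smul_mem c hm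
  | add a b _ _ iha ihb => simpa only [add_mul] using M.add_mem (iha hm) (ihb hm)
  | mul a b _ _ iha ihb => simpa only [mul_assoc] using iha (ihb hm)

theorem mul_right_mem_of_adjoin_eq_top {s : Set A} (hs : Algebra.adjoin R s = ⊤)
    {M : Submodule R A} (hM : ∀ a ∈ s, ∀ m ∈ M, m * a ∈ M) (a : A) {m : A} (hm : m ∈ M) :
    m * a ∈ M := by
  have ha : a ∈ Algebra.adjoin R s := hs ▸ Algebra.mem_top
  induction ha using Algebra.adjoin_induction generalizing m with
  | mem a ha => exact hM a ha m hm
  | algebraMap c => simpa only [← Algebra.commutes, ← Algebra.smul_def] using M.smul_mem c hm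
  | add a b _ _ iha ihb => simpa only [mul_add] using M.add_mem (iha hm) (ihb hm)
  | mul a b _ _ iha ihb => simpa only [← mul_assoc] using ihb (iha hm)

variable {α β : R} {x y r : A}

theorem pow_mul_mem_span (hx : x ^ 3 = α • x ^ 2 + β • x + 1) (k : ℕ) :
    x ^ k * r ∈ Submodule.span R {r, x * r, x ^ 2 * r} := by
  induction k using Nat.strong_induction_on with
  | _ k ih =>
    match k, ih with
    | 0, _ => simpa using Submodule.subset_span (Set.mem_insert _ _)
    | 1, _ => simpa using Submodule.subset_span (Set.mem_insert_of_mem _ (Set.mem_insert _ _))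
    | 2, _ => exact Submodule.subset_span (by simp)
    | k + 3, ih =>
      have hrec : x ^ (k + 3) * r = α • (x ^ (k + 2) * r) + β • (x ^ (k + 1) * r) + x ^ k * r := by
        rw [pow_add, hx, mul_add, mul_add, mul_smul_comm, mul_smul_comm, ← pow_add, mul_one,
          ← pow_succ, add_mul, add_mul, smul_mul_assoc, smul_mul_assoc]
      rw [hrec]
      exact add_mem (add_mem (Submodule.smul_mem _ _ (ih _ (by omega)))
        (Submodule.smul_mem _ _ (ih _ (by omega)))) (ih _ (by omega))

theorem span_le_comap_of_pow_mul (hx : x ^ 3 = α • x ^ 2 + β • x + 1) (f : A →ₗ[R] A)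
    (hf : ∀ k : ℕ, f (x ^ k * r) = x ^ (k + 1) * r) :
    Submodule.span R {r, x * r, x ^ 2 * r} ≤ (Submodule.span R {r, x * r, x ^ 2 * r}).comap f := by
  have h k : f (x ^ k * r) ∈ Submodule.span R {r, x * r, x ^ 2 * r} :=
    hf k ▸ pow_mul_mem_span hx (k + 1)
  rw [Submodule.span_le]
  rintro _ (rfl | rfl | rfl)
  · simpa using h 0
  · simpa using h 1
  · exact h 2

theorem mem_twoSidedIdeal_span_singleton_iff (hgen : Algebra.adjoin R {x, y} = ⊤)
    (hx : x ^ 3 = α • x ^ 2 + β • x + 1) (hxr : Commute x r) (hyr : y * r = x * r)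
    (hry : r * y = r * x) {w : A} :
    w ∈ TwoSidedIdeal.span {r} ↔ w ∈ Submodule.span R {r, x * r, x ^ 2 * r} := by
  set M := Submodule.span R {r, x * r, x ^ 2 * r}
  have hleft : ∀ a ∈ ({x, y} : Set A), ∀ m ∈ M, a * m ∈ M := by
    rintro a (rfl | rfl) m hm
    · refine span_le_comap_of_pow_mul hx (LinearMap.mulLeft R a) (fun k => ?_) hm
      rw [LinearMap.mulLeft_apply, ← mul_assoc, ← pow_succ']
    · refine span_le_comap_of_pow_mul hx (LinearMap.mulLeft R a) (fun k => ?_) hm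
      rw [LinearMap.mulLeft_apply, (hxr.pow_left k).eq, ← mul_assoc, hyr, mul_assoc,
        ← (hxr.pow_left k).eq, ← mul_assoc, ← pow_succ']
  have hright : ∀ a ∈ ({x, y} : Set A), ∀ m ∈ M, m * a ∈ M := by
    rintro a (rfl | rfl) m hm
    · refine span_le_comap_of_pow_mul hx (LinearMap.mulRight R a) (fun k => ?_) hm
      rw [LinearMap.mulRight_apply, mul_assoc, ← hxr.eq, ← mul_assoc, ← pow_succ]
    · refine span_le_comap_of_pow_mul hx (LinearMap.mulRight R a) (fun k => ?_) hm
      rw [LinearMap.mulRight_apply, mul_assoc, hry, ← hxr.eq, ← mul_assoc, ← pow_succ]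
  constructor
  · intro hw
    induction hw using TwoSidedIdeal.span_induction with
    | mem _ h => exact Set.mem_singleton_iff.mp h ▸ Submodule.subset_span (Set.mem_insert _ _)
    | zero => exact zero_mem _
    | add _ _ _ _ h₁ h₂ => exact add_mem h₁ h₂
    | neg _ _ h => exact neg_mem h
    | left_absorb a _ _ h => exact mul_left_mem_of_adjoin_eq_top hgen hleft a h
    | right_absorb a _ _ h => exact mul_right_mem_of_adjoin_eq_top hgen hright a h
  · intro hw
    have hr : r ∈ TwoSidedIdeal.span {r} := TwoSidedIdeal.subset_span rfl
    induction hw using Submodule.span_induction with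
    | mem _ h =>
      rcases h with rfl | rfl | rfl
      exacts [hr, TwoSidedIdeal.mul_mem_left _ _ _ hr, TwoSidedIdeal.mul_mem_left _ _ _ hr]
    | zero => exact zero_mem _
    | add _ _ _ _ h₁ h₂ => exact add_mem h₁ h₂
    | smul c _ _ h => simpa only [Algebra.smul_def] using TwoSidedIdeal.mul_mem_left _ _ _ h

end IdealSpan

/-- The two-sided ideal of `H(Q_{α,β},3)` generated by `R₀` coincides with the complex
linear span of `R₀`, `b₁·R₀` and `b₁²·R₀`. -/
theorem statement_5 (α β : ℂ) (w : CubicHecke ℂ α β 3) :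
    w ∈ TwoSidedIdeal.span {rZero α β} ↔
      w ∈ Submodule.span ℂ
        {rZero α β, bOne α β * rZero α β, bOne α β ^ 2 * rZero α β} := by
  have hb₁ : bOne α β ^ 3 = α • bOne α β ^ 2 + β • bOne α β + 1 := hb_pow_three α β 3 _
  have hb₂ : bTwo α β ^ 3 = α • bTwo α β ^ 2 + β • bTwo α β + 1 := hb_pow_three α β 3 _
  have hbraid : bOne α β * bTwo α β * bOne α β = bTwo α β * bOne α β * bTwo α β :=
    hb_braid α β 3 rfl
  have hgen : Algebra.adjoin ℂ {bOne α β, bTwo α β} = ⊤ := by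
    rw [← adjoin_range_hb α β 3]
    congr 1
    ext
    simp [Fin.exists_fin_two, bOne, bTwo, eq_comm]
  exact mem_twoSidedIdeal_span_singleton_iff hgen hb₁ (commute_R0elt hb₁ hbraid)
    (mul_R0elt_eq hb₁ hb₂ hbraid) (R0elt_mul_eq hb₁ hb₂ hbraid)
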